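/- arXiv:1310.5656 — 9 statements merged into one kernel-verified Lean document; each statement's English description precedes it below -/
import Mathlib

section
/- Suppose J is recursively enumerable and there exists a recursively enumerable set H ⊆ I³ such that for all i₁,i₂ ∈ I, U_{i₁} ∩ U_{i₂} = ⋃ {U_i | (i₁,i₂,i) ∈ H}. If f is (U,V)-computable then there exists a recursively enumerable (U,V)-approximation system for f. -/
/-!
Let `W` be the r.e. set of axioms of the enumeration operator, so that `f x ∈ V j` iff some
`(l, j) ∈ W` has `x ∈ U a` for every `a ∈ l`. Using `H` to intersect the members of `l` one at
a time produces indices `i` with `U i ⊆ ⋂ a ∈ l, U a`, and these sets cover `⋂ a ∈ l, U a`.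
Pairing each such `i` with `j` gives the approximation system. The set of pairs `(l, i)` so
produced is the least fixed point of an r.e. rule, hence r.e.: stage `s` of the enumeration
only looks at indices below `s` and at the first `s` steps of the enumerations of `H`.
-/

/-- A set in a primcodable type is recursively enumerable. -/
def IsRE {α : Type} [Primcodable α] (S : Set α) : Prop :=
  Partrec fun a => Part.assert (a ∈ S) fun _ => Part.some ()

/-- `F` is an enumeration operator. -/
def IsEnumOp (F : Set ℕ → Set ℕ) : Prop :=
  ∃ W : Set (List ℕ × ℕ), IsRE W ∧
    ∀ M : Set ℕ, F M = {j | ∃ l : List ℕ, (∀ i ∈ l, i ∈ M) ∧ (l, j) ∈ W}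

namespace REPred

variable {α β : Type} [Primcodable α] [Primcodable β]

theorem of_exists_primrec {p : α → Prop} {q : α → β → Bool} (hq : Primrec₂ q)
    (h : ∀ a, p a ↔ ∃ b, q a b = true) : REPred p := by
  have hf : Primrec₂ fun a n => (Encodable.decode (α := β) n).bind
      fun b => bif q a b then some () else none :=
    Primrec.option_bind (Primrec.decode.comp Primrec.snd)
      (Primrec.cond (hq.comp (Primrec.fst.comp Primrec.fst) Primrec.snd)
        (Primrec.const (some ())) (Primrec.const none)).to₂
  refine (Partrec.rfindOpt hf.to_comp).dom_re.of_eq fun a => ?_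
  rw [Nat.rfindOpt_dom, h]
  constructor
  · rintro ⟨n, u, hu⟩
    simp only [Option.mem_def, Option.bind_eq_some_iff] at hu
    obtain ⟨b, -, hb⟩ := hu
    exact ⟨b, by cases hqb : q a b <;> simp_all⟩
  · rintro ⟨b, hb⟩
    exact ⟨Encodable.encode b, (), by simp [hb]⟩

open Nat.Partrec in
theorem exists_monotone_primrec {p : α → Prop} (hp : REPred p) :
    ∃ g : α → ℕ → Bool, Primrec₂ g ∧ (∀ a, Monotone (g a)) ∧ ∀ a, p a ↔ ∃ n, g a n = true := by
  obtain ⟨c, hc⟩ := Code.exists_code.1 hp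
  refine ⟨fun a n => (Code.evaln n c (Encodable.encode a)).isSome, ?_, ?_, ?_⟩
  · exact Primrec.option_isSome.comp (Code.primrec_evaln.comp
      ((Primrec.snd.pair (Primrec.const c)).pair (Primrec.encode.comp Primrec.fst)))
  · intro a n m hnm
    cases h : Code.evaln n c (Encodable.encode a) with
    | none => simp [h]
    | some x => simp [Option.isSome_iff_exists.2 ⟨x, Code.evaln_mono hnm h⟩]
  · intro a
    have hdom : p a ↔ (Code.eval c (Encodable.encode a)).Dom := by
      simp [hc, Part.assert]
    simp only [hdom, Part.dom_iff_mem, Code.evaln_complete, Option.isSome_iff_exists,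
      Option.mem_def]
    exact exists_comm

protected theorem and {p q : α → Prop} (hp : REPred p) (hq : REPred q) :
    REPred fun a => p a ∧ q a := by
  obtain ⟨gp, hgp, -, hp⟩ := hp.exists_monotone_primrec
  obtain ⟨gq, hgq, -, hq⟩ := hq.exists_monotone_primrec
  refine of_exists_primrec (q := fun a (n : ℕ × ℕ) => gp a n.1 && gq a n.2)
    ((Primrec.and.comp (hgp.comp Primrec.fst (Primrec.fst.comp Primrec.snd))
      (hgq.comp Primrec.fst (Primrec.snd.comp Primrec.snd)))) fun a => ?_
  simp [hp, hq]

theorem projection {p : α × β → Prop} (hp : REPred p) : REPred fun a => ∃ b, p (a, b) := by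
  obtain ⟨g, hg, -, hp⟩ := hp.exists_monotone_primrec
  refine of_exists_primrec (q := fun a (n : β × ℕ) => g (a, n.1) n.2)
    (hg.comp (Primrec.fst.pair (Primrec.fst.comp Primrec.snd)) (Primrec.snd.comp Primrec.snd))
    fun a => ?_
  simp [hp]

end REPred

/-- `i` arises from `l` by intersecting with its members one at a time through `H`, so that
`U i ⊆ ⋂ a ∈ l, U a`; for `l = []` any output index of `H` will do, which keeps the relation r.e. -/
def IsMeetIndex (H : Set (ℕ × ℕ × ℕ)) : List ℕ → ℕ → Prop
  | [], i => ∃ t ∈ H, t.2.2 = i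
  | a :: l, i => ∃ i', IsMeetIndex H l i' ∧ (a, i', i) ∈ H

section Topology

variable {X : Type*} {I : Set ℕ} {U : ℕ → Set X} {H : Set (ℕ × ℕ × ℕ)}

theorem exists_mem_of_mem_inter
    (hH : ∀ i₁ ∈ I, ∀ i₂ ∈ I, U i₁ ∩ U i₂ = ⋃ i ∈ {i | (i₁, i₂, i) ∈ H}, U i)
    {a b : ℕ} (ha : a ∈ I) (hb : b ∈ I) {x : X} (hx : x ∈ U a ∩ U b) :
    ∃ i, (a, b, i) ∈ H ∧ x ∈ U i := by
  rw [hH a ha b hb] at hx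
  simpa using hx

theorem IsMeetIndex.mem (hHI : ∀ t ∈ H, t.1 ∈ I ∧ t.2.1 ∈ I ∧ t.2.2 ∈ I) :
    ∀ {l : List ℕ} {i : ℕ}, IsMeetIndex H l i → i ∈ I
  | [], _, ⟨t, ht, rfl⟩ => (hHI t ht).2.2
  | _ :: _, _, ⟨_, _, ht⟩ => (hHI _ ht).2.2

theorem IsMeetIndex.forall_mem (hHI : ∀ t ∈ H, t.1 ∈ I ∧ t.2.1 ∈ I ∧ t.2.2 ∈ I)
    (hH : ∀ i₁ ∈ I, ∀ i₂ ∈ I, U i₁ ∩ U i₂ = ⋃ i ∈ {i | (i₁, i₂, i) ∈ H}, U i) {x : X} :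
    ∀ {l : List ℕ} {i : ℕ}, IsMeetIndex H l i → x ∈ U i → ∀ a ∈ l, a ∈ I ∧ x ∈ U a
  | [], _, _, _ => by simp
  | b :: l, i, ⟨i', hi', ht⟩, hx => by
    have hbI := (hHI _ ht).1
    have hxbi' : x ∈ U b ∩ U i' := by
      rw [hH b hbI i' (hHI _ ht).2.1]
      exact Set.mem_biUnion ht hx
    simpa [hbI, hxbi'.1] using hi'.forall_mem hHI hH hxbi'.2

theorem exists_isMeetIndex (hHI : ∀ t ∈ H, t.1 ∈ I ∧ t.2.1 ∈ I ∧ t.2.2 ∈ I)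
    (hH : ∀ i₁ ∈ I, ∀ i₂ ∈ I, U i₁ ∩ U i₂ = ⋃ i ∈ {i | (i₁, i₂, i) ∈ H}, U i) {x : X}
    (hx : ∃ i ∈ I, x ∈ U i) :
    ∀ {l : List ℕ}, (∀ a ∈ l, a ∈ I ∧ x ∈ U a) → ∃ i, IsMeetIndex H l i ∧ x ∈ U i
  | [], _ => by
    obtain ⟨i₀, hi₀, hxi₀⟩ := hx
    obtain ⟨i, hi, hxi⟩ := exists_mem_of_mem_inter hH hi₀ hi₀ ⟨hxi₀, hxi₀⟩
    exact ⟨i, ⟨_, hi, rfl⟩, hxi⟩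
  | a :: l, hl => by
    obtain ⟨haI, hxa⟩ := hl a List.mem_cons_self
    obtain ⟨i', hi', hxi'⟩ :=
      exists_isMeetIndex hHI hH hx fun b hb => hl b (List.mem_cons_of_mem a hb)
    obtain ⟨i, hi, hxi⟩ := exists_mem_of_mem_inter hH haI (hi'.mem hHI) ⟨hxa, hxi'⟩
    exact ⟨i, ⟨i', hi', hi⟩, hxi⟩

end Topology

section Stages

variable (gB : ℕ → ℕ → Bool) (gH : ℕ × ℕ × ℕ → ℕ → Bool)

/-- The indices below `s` certified by `IsMeetIndex` when `gB` and `gH` are stage-wise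
enumerations of the base case and of `H`, both cut off at stage `s`. -/
def meetIndicesAt (s : ℕ) : List ℕ → List ℕ
  | [] => (List.range s).filter (gB · s)
  | a :: l => (List.range s).filter fun i => (meetIndicesAt s l).any fun i' => gH (a, i', i) s

variable {gB gH}

open Primrec in
theorem primrec_meetIndicesAt (hgB : Primrec₂ gB) (hgH : Primrec₂ gH) :
    Primrec₂ fun (l : List ℕ) s => meetIndicesAt gB gH s l := by
  have hfilter {β : Type} [Primcodable β] {c : ℕ → β → Bool} (hc : Primrec₂ c) :
      Primrec₂ fun (L : List ℕ) b => L.filter (c · b) :=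
    (PrimrecRel.listFilter (Primrec.eq.comp₂ hc (const true).to₂)).of_eq fun L b => by simp
  have hany : Primrec₂ fun (L : List ℕ) (y : ℕ × ℕ × ℕ) =>
      L.any fun i' => gH (y.1, i', y.2.1) y.2.2 :=
    have hR : PrimrecRel fun (i' : ℕ) (y : ℕ × ℕ × ℕ) => gH (y.1, i', y.2.1) y.2.2 = true :=
      Primrec.eq.comp₂ (hgH.comp₂ ((fst.comp snd).pair (fst.pair (fst.comp (snd.comp snd)))).to₂
        (snd.comp (snd.comp snd)).to₂) (const true).to₂
    hR.exists_mem_list.decide.of_eq fun L y => by simp [List.any_eq]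
  have hstep : Primrec₂ fun (x : List ℕ × ℕ) (t : ℕ × List ℕ × List ℕ) =>
      (List.range x.2).filter fun i => t.2.2.any fun i' => gH (t.1, i', i) x.2 :=
    (hfilter (c := fun i (b : List ℕ × ℕ × ℕ) => b.1.any fun i' => gH (b.2.1, i', i) b.2.2)
        (hany.comp (fst.comp snd)
          ((fst.comp (snd.comp snd)).pair (fst.pair (snd.comp (snd.comp snd)))))).comp
      (list_range.comp (snd.comp fst))
      ((snd.comp (snd.comp snd)).pair ((fst.comp snd).pair (snd.comp fst)))
  refine (list_rec fst ((hfilter hgB).comp (list_range.comp snd) snd) hstep).of_eq ?_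
  rintro ⟨l, s⟩
  induction l with
  | nil => rfl
  | cons a l ih => simp only [meetIndicesAt, ← ih]

theorem meetIndicesAt_mono (hgB : ∀ i, Monotone (gB i)) (hgH : ∀ t, Monotone (gH t))
    {s s' : ℕ} (hs : s ≤ s') {i : ℕ} : ∀ {l : List ℕ},
      i ∈ meetIndicesAt gB gH s l → i ∈ meetIndicesAt gB gH s' l
  | [], h => by
    simp only [meetIndicesAt, List.mem_filter, List.mem_range] at h ⊢
    exact ⟨h.1.trans_le hs, hgB i hs h.2⟩
  | a :: l, h => by
    simp only [meetIndicesAt, List.mem_filter, List.mem_range, List.any_eq_true] at h ⊢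
    obtain ⟨hi, i', hi', hH⟩ := h
    exact ⟨hi.trans_le hs, i', meetIndicesAt_mono hgB hgH hs hi', hgH _ hs hH⟩

theorem isMeetIndex_iff_exists_mem_meetIndicesAt {H : Set (ℕ × ℕ × ℕ)}
    (hgB : ∀ i, Monotone (gB i)) (hgH : ∀ t, Monotone (gH t))
    (hB : ∀ i, (∃ t ∈ H, t.2.2 = i) ↔ ∃ n, gB i n = true)
    (hH : ∀ t, t ∈ H ↔ ∃ n, gH t n = true) :
    ∀ l i, IsMeetIndex H l i ↔ ∃ s, i ∈ meetIndicesAt gB gH s l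
  | [], i => by
    simp only [IsMeetIndex, hB, meetIndicesAt, List.mem_filter, List.mem_range]
    refine ⟨fun ⟨n, hn⟩ => ⟨max n (i + 1), by omega, Bool.le_iff_imp.1 (hgB i (by omega)) hn⟩,
      fun ⟨s, _, hs⟩ => ⟨s, hs⟩⟩
  | a :: l, i => by
    simp only [IsMeetIndex, isMeetIndex_iff_exists_mem_meetIndicesAt hgB hgH hB hH l, hH,
      meetIndicesAt, List.mem_filter, List.mem_range, List.any_eq_true]
    constructor
    · rintro ⟨i', ⟨s, hs⟩, n, hn⟩
      refine ⟨max (max s n) (i + 1), by omega, i', meetIndicesAt_mono hgB hgH (by omega) hs,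
        Bool.le_iff_imp.1 (hgH _ (by omega)) hn⟩
    · rintro ⟨s, -, i', hs, hn⟩
      exact ⟨i', ⟨s, hs⟩, s, hn⟩

end Stages

theorem isMeetIndex_re {H : Set (ℕ × ℕ × ℕ)} (hH : REPred (· ∈ H)) :
    REPred fun q : List ℕ × ℕ => IsMeetIndex H q.1 q.2 := by
  have hB : REPred fun i => ∃ t ∈ H, t.2.2 = i :=
    REPred.projection <| REPred.and (hH.comp Computable.snd) <| ComputablePred.to_re <|
      (Primrec.eq.comp (Primrec.snd.comp (Primrec.snd.comp Primrec.snd)) Primrec.fst).computablePred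
  obtain ⟨gB, hgB, hgB_mono, hB⟩ := hB.exists_monotone_primrec
  obtain ⟨gH, hgH, hgH_mono, hH⟩ := hH.exists_monotone_primrec
  have hmem : PrimrecRel fun (i : ℕ) (L : List ℕ) => i ∈ L :=
    (PrimrecRel.exists_mem_list Primrec.eq).swap.of_eq fun i L => by simp
  refine REPred.of_exists_primrec
    (q := fun (x : List ℕ × ℕ) s => decide (x.2 ∈ meetIndicesAt gB gH s x.1))
    (hmem.decide.comp (Primrec.snd.comp Primrec.fst)
      ((primrec_meetIndicesAt hgB hgH).comp (Primrec.fst.comp Primrec.fst) Primrec.snd)) fun x => ?_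
  simpa using isMeetIndex_iff_exists_mem_meetIndicesAt hgB_mono hgH_mono hB hH x.1 x.2

theorem stmt5_general {X Y : Type*} [TopologicalSpace X]
    (I J : Set ℕ) (U : ℕ → Set X) (V : ℕ → Set Y)
    (hU : TopologicalSpace.IsTopologicalBasis (U '' I))
    (E : Set X) (f : X → Y)
    (hJre : IsRE J)
    (H : Set (ℕ × ℕ × ℕ))
    (hHI : ∀ t ∈ H, t.1 ∈ I ∧ t.2.1 ∈ I ∧ t.2.2 ∈ I)
    (hHre : IsRE H)
    (hH : ∀ i₁ ∈ I, ∀ i₂ ∈ I,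
        U i₁ ∩ U i₂ = ⋃ i ∈ {i | (i₁, i₂, i) ∈ H}, U i)
    (hcomp : ∃ F : Set ℕ → Set ℕ, IsEnumOp F ∧
        ∀ x ∈ E, {j | j ∈ J ∧ f x ∈ V j} = F {i | i ∈ I ∧ x ∈ U i}) :
    ∃ R : Set (ℕ × ℕ), IsRE R ∧ (∀ p ∈ R, p.1 ∈ I ∧ p.2 ∈ J) ∧
      ∀ x ∈ E, ∀ j ∈ J, f x ∈ V j ↔ ∃ i, (i, j) ∈ R ∧ x ∈ U i := by
  obtain ⟨F, ⟨W, hWre, hFW⟩, hFx⟩ := hcomp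
  have hcover (x : X) : ∃ i ∈ I, x ∈ U i := by
    have hx : x ∈ ⋃₀ (U '' I) := hU.sUnion_eq ▸ Set.mem_univ x
    simpa using hx
  have hW : ∀ x ∈ E, ∀ j ∈ J,
      f x ∈ V j ↔ ∃ l : List ℕ, (∀ a ∈ l, a ∈ I ∧ x ∈ U a) ∧ (l, j) ∈ W := by
    intro x hx j hj
    simpa [hj, hFW] using Set.ext_iff.1 (hFx x hx) j
  refine ⟨{p | p.2 ∈ J ∧ ∃ l, (l, p.2) ∈ W ∧ IsMeetIndex H l p.1}, ?_, ?_, ?_⟩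
  · open Computable in
    exact REPred.and ((hJre : REPred (· ∈ J)).comp snd) <| REPred.projection <|
      REPred.and ((hWre : REPred (· ∈ W)).comp (snd.pair (snd.comp fst)))
        ((isMeetIndex_re hHre).comp (snd.pair (fst.comp fst)))
  · rintro ⟨i, j⟩ ⟨hj, l, -, hl⟩
    exact ⟨hl.mem hHI, hj⟩
  · intro x hx j hj
    rw [hW x hx j hj]
    constructor
    · rintro ⟨l, hl, hlW⟩
      obtain ⟨i, hi, hxi⟩ := exists_isMeetIndex hHI hH (hcover x) hl
      exact ⟨i, ⟨hj, l, hlW, hi⟩, hxi⟩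
    · rintro ⟨i, ⟨-, l, hlW, hi⟩, hxi⟩
      exact ⟨l, hi.forall_mem hHI hH hxi, hlW⟩

/-- if J is r.e., intersections of base sets of U are computable via an
r.e. set H, and f is (U,V)-computable, then there is an r.e. (U,V)-approximation
system for f. -/
theorem stmt5 {X Y : Type*} [TopologicalSpace X] [TopologicalSpace Y]
    (I J : Set ℕ) (U : ℕ → Set X) (V : ℕ → Set Y)
    (hU : TopologicalSpace.IsTopologicalBasis (U '' I))
    (hV : TopologicalSpace.IsTopologicalBasis (V '' J))
    (E : Set X) (f : X → Y)
    (hJre : IsRE J)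
    (H : Set (ℕ × ℕ × ℕ))
    (hHI : ∀ t ∈ H, t.1 ∈ I ∧ t.2.1 ∈ I ∧ t.2.2 ∈ I)
    (hHre : IsRE H)
    (hH : ∀ i₁ ∈ I, ∀ i₂ ∈ I,
        U i₁ ∩ U i₂ = ⋃ i ∈ {i | (i₁, i₂, i) ∈ H}, U i)
    (hcomp : ∃ F : Set ℕ → Set ℕ, IsEnumOp F ∧
        ∀ x ∈ E, {j | j ∈ J ∧ f x ∈ V j} = F {i | i ∈ I ∧ x ∈ U i}) :
    ∃ R : Set (ℕ × ℕ), IsRE R ∧ (∀ p ∈ R, p.1 ∈ I ∧ p.2 ∈ J) ∧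
      ∀ x ∈ E, ∀ j ∈ J, f x ∈ V j ↔ ∃ i, (i, j) ∈ R ∧ x ∈ U i :=
  stmt5_general I J U V hU E f hJre H hHI hHre hH hcomp
end

section
/- There exist a partition of ℕ into two-element sets P₀, P₁, P₂, … such that for each x the two numbers in P_x differ by exactly x+1, and no total recursive function g satisfies g(x) ∈ P_x for all x ∈ ℕ. -/
/-!
There are only countably many computable functions; enumerate them as `G 0, G 1, …`.
The blocks are built in finite stages, each a finite set of pairs `(x, a)` with distinct
indices and disjoint blocks `{a, a + (x + 1)}`. Everything from `bound s` on is unused, so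
stage `e` can cover the number `e` (using a fresh large index), give the index `e` a block of
fresh large numbers, and finally give a fresh large index `x` a block lying entirely above
`G e x`. In the limit every number and every index is used exactly once, and `G e` misses `P x`.
-/

namespace SkolemPartition

open Finset

/-- The pair `(x, a)` stands for the block `P x = {a, a + (x + 1)}`. -/
def block (p : ℕ × ℕ) : Finset ℕ := {p.2, p.2 + (p.1 + 1)}

structure IsPairing (S : Set (ℕ × ℕ)) : Prop where
  injOn_fst : S.InjOn Prod.fst
  pairwiseDisjoint : S.PairwiseDisjoint block

theorem IsPairing.exists_partition {S : Set (ℕ × ℕ)} (hS : IsPairing S)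
    (hfst : ∀ x, ∃ a, (x, a) ∈ S) (hcov : ∀ n, ∃ p ∈ S, n ∈ block p) :
    ∃ P : ℕ → Finset ℕ, (∀ x y, x ≠ y → Disjoint (P x) (P y)) ∧ (∀ n, ∃ x, n ∈ P x) ∧
      (∀ x, ∃ a, P x = {a, a + (x + 1)}) ∧ ∀ p ∈ S, P p.1 = block p := by
  choose a ha using hfst
  have hP : ∀ p ∈ S, block (p.1, a p.1) = block p := fun p hp =>
    congrArg block (hS.injOn_fst (ha p.1) hp rfl)
  refine ⟨fun x => block (x, a x), fun x y hxy => ?_, fun n => ?_, fun x => ⟨a x, rfl⟩, hP⟩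
  · exact hS.pairwiseDisjoint (ha x) (ha y) fun h => hxy (congrArg Prod.fst h)
  · obtain ⟨p, hp, hn⟩ := hcov n
    exact ⟨p.1, ((hP p hp).symm ▸ hn : n ∈ block (p.1, a p.1))⟩

def covered (s : Finset (ℕ × ℕ)) : Finset ℕ := s.biUnion block

def indices (s : Finset (ℕ × ℕ)) : Finset ℕ := s.image Prod.fst

def bound (s : Finset (ℕ × ℕ)) : ℕ := (covered s).sup id + 1

section Bound

variable {s : Finset (ℕ × ℕ)}

theorem lt_bound_of_mem_covered {n : ℕ} (h : n ∈ covered s) : n < bound s :=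
  Nat.lt_succ_of_le (le_sup (f := id) h)

theorem notMem_covered_of_bound_le {n : ℕ} (h : bound s ≤ n) : n ∉ covered s :=
  fun hn => (lt_bound_of_mem_covered hn).not_ge h

theorem notMem_indices_of_bound_le {x : ℕ} (h : bound s ≤ x) : x ∉ indices s := by
  simp only [indices, mem_image]
  rintro ⟨p, hp, rfl⟩
  have : p.2 + (p.1 + 1) ∈ covered s := mem_biUnion.2 ⟨p, hp, by simp [block]⟩
  have := lt_bound_of_mem_covered this
  omega

end Bound

theorem IsPairing.insert {s : Finset (ℕ × ℕ)} (hs : IsPairing (s : Set (ℕ × ℕ))) {x a : ℕ}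
    (hx : x ∉ indices s) (ha : a ∉ covered s) (hax : a + (x + 1) ∉ covered s) :
    IsPairing (insert (x, a) s : Finset (ℕ × ℕ)) := by
  have hmem : (x, a) ∉ s := fun h => hx (mem_image_of_mem Prod.fst h)
  rw [coe_insert]
  refine ⟨(Set.injOn_insert (by simpa using hmem)).2 ⟨hs.injOn_fst, ?_⟩,
    hs.pairwiseDisjoint.insert_of_notMem (by simpa using hmem) fun q hq => ?_⟩
  · simpa [indices] using hx
  · refine disjoint_left.2 fun n hn hnq => ?_
    have : n ∈ covered s := mem_biUnion.2 ⟨q, hq, hnq⟩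
    simp only [block, mem_insert, mem_singleton] at hn
    rcases hn with rfl | rfl
    exacts [ha this, hax this]

section Steps

variable {s : Finset (ℕ × ℕ)}

def coverStep (n : ℕ) (s : Finset (ℕ × ℕ)) : Finset (ℕ × ℕ) :=
  if n ∈ covered s then s else insert (bound s, n) s

def indexStep (x : ℕ) (s : Finset (ℕ × ℕ)) : Finset (ℕ × ℕ) :=
  if x ∈ indices s then s else insert (x, bound s) s

def defeatStep (f : ℕ → ℕ) (s : Finset (ℕ × ℕ)) : Finset (ℕ × ℕ) :=
  insert (bound s, bound s + f (bound s) + 1) s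

theorem subset_coverStep (n : ℕ) : s ⊆ coverStep n s := by
  unfold coverStep; split_ifs <;> simp

theorem subset_indexStep (x : ℕ) : s ⊆ indexStep x s := by
  unfold indexStep; split_ifs <;> simp

theorem subset_defeatStep (f : ℕ → ℕ) : s ⊆ defeatStep f s := subset_insert _ _

theorem mem_covered_coverStep (n : ℕ) : n ∈ covered (coverStep n s) := by
  unfold coverStep; split_ifs with h
  · exact h
  · exact mem_biUnion.2 ⟨_, mem_insert_self _ _, by simp [block]⟩

theorem mem_indices_indexStep (x : ℕ) : x ∈ indices (indexStep x s) := by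
  unfold indexStep; split_ifs with h
  · exact h
  · exact mem_image_of_mem Prod.fst (mem_insert_self _ _)

theorem exists_lt_of_defeatStep (f : ℕ → ℕ) : ∃ p ∈ defeatStep f s, f p.1 < p.2 :=
  ⟨_, mem_insert_self _ _, by dsimp only; omega⟩

theorem IsPairing.coverStep (hs : IsPairing (s : Set (ℕ × ℕ))) (n : ℕ) :
    IsPairing (coverStep n s : Set (ℕ × ℕ)) := by
  unfold SkolemPartition.coverStep; split_ifs with h
  · exact hs
  · exact hs.insert (notMem_indices_of_bound_le le_rfl) h (notMem_covered_of_bound_le (by omega))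

theorem IsPairing.indexStep (hs : IsPairing (s : Set (ℕ × ℕ))) (x : ℕ) :
    IsPairing (indexStep x s : Set (ℕ × ℕ)) := by
  unfold SkolemPartition.indexStep; split_ifs with h
  · exact hs
  · exact hs.insert h (notMem_covered_of_bound_le le_rfl) (notMem_covered_of_bound_le (by omega))

theorem IsPairing.defeatStep (hs : IsPairing (s : Set (ℕ × ℕ))) (f : ℕ → ℕ) :
    IsPairing (defeatStep f s : Set (ℕ × ℕ)) :=
  hs.insert (notMem_indices_of_bound_le le_rfl) (notMem_covered_of_bound_le (by omega))
    (notMem_covered_of_bound_le (by omega))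

end Steps

def stage (G : ℕ → ℕ → ℕ) (e : ℕ) (s : Finset (ℕ × ℕ)) : Finset (ℕ × ℕ) :=
  defeatStep (G e) (indexStep e (coverStep e s))

def pairing (G : ℕ → ℕ → ℕ) : ℕ → Finset (ℕ × ℕ)
  | 0 => ∅
  | e + 1 => stage G e (pairing G e)

section Pairing

variable (G : ℕ → ℕ → ℕ)

theorem pairing_mono : Monotone (pairing G) :=
  monotone_nat_of_le_succ fun e =>
    ((subset_coverStep e).trans (subset_indexStep e)).trans (subset_defeatStep (G e))

theorem isPairing_pairing (e : ℕ) : IsPairing (pairing G e : Set (ℕ × ℕ)) := by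
  induction e with
  | zero => exact ⟨by simp [pairing], by simp [pairing]⟩
  | succ e ih => exact ((ih.coverStep e).indexStep e).defeatStep (G e)

theorem mem_covered_pairing (n : ℕ) : n ∈ covered (pairing G (n + 1)) :=
  biUnion_subset_biUnion_of_subset_left _ ((subset_indexStep n).trans (subset_defeatStep _))
    (mem_covered_coverStep n)

theorem mem_indices_pairing (x : ℕ) : x ∈ indices (pairing G (x + 1)) :=
  image_subset_image (subset_defeatStep _) (mem_indices_indexStep x)

theorem exists_lt_of_pairing (e : ℕ) : ∃ p ∈ pairing G (e + 1), G e p.1 < p.2 :=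
  exists_lt_of_defeatStep (G e)

def limit : Set (ℕ × ℕ) := ⋃ e, (pairing G e : Set (ℕ × ℕ))

theorem isPairing_limit : IsPairing (limit G) := by
  have hd : Directed (· ⊆ ·) fun e => (pairing G e : Set (ℕ × ℕ)) :=
    Monotone.directed_le fun _ _ h => coe_subset.2 (pairing_mono G h)
  exact ⟨Set.inj_on_iUnion_of_directed hd fun e => (isPairing_pairing G e).injOn_fst,
    (Set.pairwiseDisjoint_iUnion hd).2 fun e => (isPairing_pairing G e).pairwiseDisjoint⟩

end Pairing

theorem exists_partition_avoiding (G : ℕ → ℕ → ℕ) :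
    ∃ P : ℕ → Finset ℕ, (∀ x y, x ≠ y → Disjoint (P x) (P y)) ∧ (∀ n, ∃ x, n ∈ P x) ∧
      (∀ x, ∃ a, P x = {a, a + (x + 1)}) ∧ ∀ e, ∃ x, G e x ∉ P x := by
  have hfst : ∀ x, ∃ a, (x, a) ∈ limit G := fun x => by
    obtain ⟨p, hp, rfl⟩ := mem_image.1 (mem_indices_pairing G x)
    exact ⟨p.2, Set.mem_iUnion.2 ⟨_, hp⟩⟩
  have hcov : ∀ n, ∃ p ∈ limit G, n ∈ block p := fun n => by
    obtain ⟨p, hp, hn⟩ := mem_biUnion.1 (mem_covered_pairing G n)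
    exact ⟨p, Set.mem_iUnion.2 ⟨n + 1, hp⟩, hn⟩
  obtain ⟨P, hdisj, hP, hshape, hblock⟩ := (isPairing_limit G).exists_partition hfst hcov
  refine ⟨P, hdisj, hP, hshape, fun e => ?_⟩
  obtain ⟨p, hp, hlt⟩ := exists_lt_of_pairing G e
  refine ⟨p.1, ?_⟩
  rw [hblock p (Set.mem_iUnion.2 ⟨e + 1, hp⟩), block, mem_insert, mem_singleton]
  omega

end SkolemPartition

/-- there is a partition of ℕ into two-element sets P_x whose two
elements differ by exactly x+1, such that no total recursive function selects an
element of P_x for every x. -/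
theorem stmt6 : ∃ P : ℕ → Finset ℕ,
    (∀ x y : ℕ, x ≠ y → Disjoint (P x) (P y)) ∧
    (∀ n : ℕ, ∃ x : ℕ, n ∈ P x) ∧
    (∀ x : ℕ, ∃ a : ℕ, P x = {a, a + (x + 1)}) ∧
    ¬ ∃ g : ℕ → ℕ, Computable g ∧ ∀ x : ℕ, g x ∈ P x := by
  have : Nonempty {f : ℕ → ℕ // Computable f} := ⟨⟨id, Computable.id⟩⟩
  obtain ⟨G, hG⟩ := exists_surjective_nat {f : ℕ → ℕ // Computable f}
  obtain ⟨P, hdisj, hcov, hshape, havoid⟩ :=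
    SkolemPartition.exists_partition_avoiding fun e => (G e).1
  refine ⟨P, hdisj, hcov, hshape, ?_⟩
  rintro ⟨g, hg, hgP⟩
  obtain ⟨e, he⟩ := hG ⟨g, hg⟩
  obtain ⟨x, hx⟩ := havoid e
  rw [he] at hx
  exact hx (hgP x)
end

section
/- There exist topological spaces X, Y (both the discrete space on ℕ) with indexed bases U = {U_i}_{i∈ℕ} and V = {V_j}_{j∈ℕ} such that the identity function id_ℕ is (U,V)-computable but no recursively enumerable (U,V)-approximation system for id_ℕ exists. -/
open TopologicalSpace Set

theorem isTopologicalBasis_of_singleton_mem {α : Type*} [TopologicalSpace α] [DiscreteTopology α]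
    {B : Set (Set α)} (h : ∀ x, {x} ∈ B) : IsTopologicalBasis B :=
  isTopologicalBasis_of_isOpen_of_nhds (fun _ _ => isOpen_discrete _) fun x _ hx _ =>
    ⟨{x}, h x, rfl, singleton_subset_iff.2 hx⟩

section Enumeration

open Nat.Partrec Encodable

def reSet {α : Type} [Primcodable α] (n : ℕ) : Set α :=
  {a | ((Denumerable.ofNat Code n).eval (encode a)).Dom}

theorem IsRE.exists_eq_reSet {α : Type} [Primcodable α] {S : Set α} (h : IsRE S) :
    ∃ n, S = reSet n := by
  obtain ⟨c, hc⟩ := Code.exists_code.1 h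
  refine ⟨encode c, Set.ext fun a => ?_⟩
  simp [reSet, hc, Part.assert]

end Enumeration

/-- `(l, j)` lies in `gapGraph` iff `l = [b, b + j + 1]` for some `b`. -/
def gapGraph : Set (List ℕ × ℕ) :=
  {p | p.1 = [p.1.headI, p.1.headI + p.2 + 1]}

theorem isRE_gapGraph : IsRE gapGraph := by
  have head : Primrec fun p : List ℕ × ℕ => p.1.headI := Primrec.list_headI.comp Primrec.fst
  have gap : Primrec fun p : List ℕ × ℕ => p.1.headI + p.2 + 1 :=
    Primrec.succ.comp (Primrec.nat_add.comp head Primrec.snd)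
  have pairList : Primrec fun p : List ℕ × ℕ => [p.1.headI, p.1.headI + p.2 + 1] :=
    Primrec.list_cons.comp head (Primrec.list_cons.comp gap (Primrec.const []))
  exact (Primrec.eq.comp Primrec.fst pairList).computablePred.to_re

theorem exists_list_mem_gapGraph_iff (b x j : ℕ) :
    (∃ l : List ℕ, (∀ i ∈ l, i ∈ ({b, b + x + 1} : Set ℕ)) ∧ (l, j) ∈ gapGraph) ↔ j = x := by
  constructor
  · rintro ⟨l, hl, hgap⟩
    replace hgap : l = [l.headI, l.headI + j + 1] := hgap
    have h₁ := hl l.headI (by rw [hgap]; simp)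
    have h₂ := hl (l.headI + j + 1) (by rw [hgap]; simp)
    simp only [mem_insert_iff, mem_singleton_iff] at h₁ h₂
    omega
  · rintro rfl
    exact ⟨[b, b + j + 1], by simp, by simp [gapGraph]⟩

section Diagonal

theorem exists_avoiding_or_mem (C : Set ℕ) (m d : ℕ) :
    ∃ p : ℕ × ℕ, m ≤ p.1 ∧ p.1 + d < p.2 ∧ ((p.1 ∉ C ∧ p.1 + d ∉ C) ∨ p.2 ∈ C) := by
  by_cases h : ∃ a, m ≤ a ∧ a ∉ C ∧ a + d ∉ C
  · obtain ⟨a, hma, ha⟩ := h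
    exact ⟨(a, a + d + 1), hma, by simp, Or.inl ha⟩
  push Not at h
  by_cases hb : m + d + 1 ∈ C
  · exact ⟨(m, m + d + 1), le_rfl, by simp, Or.inr hb⟩
  · have := h (m + d + 1) (by omega) hb
    exact ⟨(m, m + d + 1 + d), le_rfl, by simp only; omega, Or.inr this⟩

variable (C : ℕ → Set ℕ)

/-- Stage `c` chooses the starts of `P_{2c}` (gap `2c + 1`) and `P_{2c+1}` (gap `2c + 2`),
beyond everything chosen at stage `c - 1`. -/
noncomputable def diagonalStage : ℕ → ℕ × ℕ
  | 0 => Classical.choose (exists_avoiding_or_mem (C 0) 0 1)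
  | c + 1 => Classical.choose (exists_avoiding_or_mem (C (c + 1))
      ((diagonalStage c).2 + 2 * c + 3) (2 * (c + 1) + 1))

theorem diagonalStage_spec (c : ℕ) :
    (diagonalStage C c).1 + (2 * c + 1) < (diagonalStage C c).2 ∧
      (((diagonalStage C c).1 ∉ C c ∧ (diagonalStage C c).1 + (2 * c + 1) ∉ C c) ∨
        (diagonalStage C c).2 ∈ C c) := by
  cases c with
  | zero => exact (Classical.choose_spec (exists_avoiding_or_mem (C 0) 0 1)).2
  | succ c => exact (Classical.choose_spec (exists_avoiding_or_mem _ _ _)).2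

theorem diagonalStage_succ_fst_ge (c : ℕ) :
    (diagonalStage C c).2 + 2 * c + 3 ≤ (diagonalStage C (c + 1)).1 :=
  (Classical.choose_spec (exists_avoiding_or_mem _ _ _)).1

noncomputable def diagonalStart (x : ℕ) : ℕ :=
  if x % 2 = 0 then (diagonalStage C (x / 2)).1 else (diagonalStage C (x / 2)).2

theorem diagonalStart_two_mul (c : ℕ) : diagonalStart C (2 * c) = (diagonalStage C c).1 := by
  simp [diagonalStart]

theorem diagonalStart_two_mul_add_one (c : ℕ) :
    diagonalStart C (2 * c + 1) = (diagonalStage C c).2 := by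
  simp [diagonalStart, show (2 * c + 1) / 2 = c by omega]

theorem exists_gap_pairs_diagonal : ∃ a : ℕ → ℕ, (∀ x, a x + x + 1 < a (x + 1)) ∧
    ∀ c, (a (2 * c) ∉ C c ∧ a (2 * c) + 2 * c + 1 ∉ C c) ∨ a (2 * c + 1) ∈ C c := by
  refine ⟨diagonalStart C, fun x => ?_, fun c => ?_⟩
  · obtain ⟨c, rfl | rfl⟩ := Nat.even_or_odd' x
    · rw [diagonalStart_two_mul, diagonalStart_two_mul_add_one]
      have := (diagonalStage_spec C c).1
      omega
    · rw [diagonalStart_two_mul_add_one, show 2 * c + 1 + 1 = 2 * (c + 1) by ring,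
        diagonalStart_two_mul]
      have := diagonalStage_succ_fst_ge C c
      omega
  · rw [diagonalStart_two_mul, diagonalStart_two_mul_add_one, add_assoc]
    exact (diagonalStage_spec C c).2

end Diagonal

theorem eq_of_mem_gap_pair {a : ℕ → ℕ} (ha : ∀ x, a x + x + 1 < a (x + 1)) {i x y : ℕ}
    (hx : i ∈ ({a x, a x + x + 1} : Set ℕ)) (hy : i ∈ ({a y, a y + y + 1} : Set ℕ)) : x = y := by
  have mono : StrictMono a := strictMono_nat_of_lt_succ fun x => by have := ha x; omega
  have before : ∀ x y, x < y → a x + x + 1 < a y := fun x y h =>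
    (ha x).trans_le (mono.monotone h)
  simp only [mem_insert_iff, mem_singleton_iff] at hx hy
  rcases lt_trichotomy x y with h | h | h
  · have := before x y h
    omega
  · exact h
  · have := before y x h
    omega

/-- there are indexed bases U, V of the discrete space ℕ such that id_ℕ
is (U,V)-computable but no r.e. (U,V)-approximation system for id_ℕ exists. -/
theorem stmt7 : ∃ U V : ℕ → Set ℕ,
    TopologicalSpace.IsTopologicalBasis (Set.range U) ∧
    TopologicalSpace.IsTopologicalBasis (Set.range V) ∧
    (∃ F : Set ℕ → Set ℕ, IsEnumOp F ∧
        ∀ x : ℕ, {j | id x ∈ V j} = F {i | x ∈ U i}) ∧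
    ¬ ∃ R : Set (ℕ × ℕ), IsRE R ∧
        ∀ x j : ℕ, id x ∈ V j ↔ ∃ i, (i, j) ∈ R ∧ x ∈ U i := by
  obtain ⟨a, ha, hdiag⟩ := exists_gap_pairs_diagonal fun n => {i | (i, 2 * n) ∈ reSet n}
  refine ⟨fun i => {x | i ∈ ({a x, a x + x + 1} : Set ℕ)}, fun j => {j},
    isTopologicalBasis_of_singleton_mem fun x => ⟨a x, Set.ext fun y =>
      ⟨fun hy => eq_of_mem_gap_pair ha hy (Or.inl rfl), fun hy => hy ▸ Or.inl rfl⟩⟩,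
    isTopologicalBasis_of_singleton_mem fun x => ⟨x, rfl⟩,
    ⟨_, ⟨gapGraph, isRE_gapGraph, fun _ => rfl⟩, fun x => Set.ext fun j =>
      (eq_comm.trans (exists_list_mem_gapGraph_iff (a x) x j).symm)⟩, ?_⟩
  rintro ⟨R, hR, hsys⟩
  obtain ⟨n, rfl⟩ := hR.exists_eq_reSet
  rcases hdiag n with ⟨hfst, hsnd⟩ | hhit
  · obtain ⟨i, hiR, hi⟩ := (hsys (2 * n) (2 * n)).1 rfl
    rcases hi with rfl | rfl
    exacts [hfst hiR, hsnd hiR]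
  · have : 2 * n + 1 = 2 * n := (hsys (2 * n + 1) (2 * n)).2 ⟨_, hhit, Or.inl rfl⟩
    omega
end

section
/- A topological (α,β)-approximation system for f exists if and only if f is continuous. -/
/-- a topological (α,β)-approximation system for f exists iff f is
continuous. -/
theorem stmt8 {X Y : Type*} [MetricSpace X] [MetricSpace Y] {K L : Type*}
    (α : K → X) (β : L → Y) (hα : DenseRange α) (hβ : DenseRange β)
    (r : ℕ → ℚ) (hrpos : ∀ n, 0 < r n)
    (hracc : ∀ ε : ℝ, 0 < ε → ∃ n, (r n : ℝ) < ε)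
    (E : Set X) (f : X → Y) :
    (∃ S : Set (K × ℕ × L × ℕ), ∀ x ∈ E, ∀ l : L, ∀ n : ℕ,
        dist (β l) (f x) < (r n : ℝ) ↔
          ∃ k m, (k, m, l, n) ∈ S ∧ dist (α k) x < (r m : ℝ)) ↔
    ContinuousOn f E := by
  constructor
  · rintro ⟨S, hS⟩
    rw [Metric.continuousOn_iff]
    intro x hx ε hε
    obtain ⟨n, hn⟩ := hracc (ε / 2) (by linarith)
    have hrn : (0 : ℝ) < r n := by exact_mod_cast hrpos n
    obtain ⟨l, hl⟩ := hβ.exists_dist_lt (f x) hrn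
    rw [dist_comm] at hl
    obtain ⟨k, m, hkm, hk⟩ := (hS x hx l n).mp hl
    refine ⟨(r m : ℝ) - dist (α k) x, by linarith, fun y hy hdy => ?_⟩
    have hky : dist (α k) y < (r m : ℝ) := by
      have := dist_triangle (α k) x y
      rw [dist_comm y x] at hdy
      linarith
    have hly : dist (β l) (f y) < (r n : ℝ) :=
      (hS y hy l n).mpr ⟨k, m, hkm, hky⟩
    have := dist_triangle (f y) (β l) (f x)
    rw [dist_comm (f y) (β l)] at this
    linarith
  · intro hf
    refine ⟨{p | ∀ x ∈ E, dist (α p.1) x < (r p.2.1 : ℝ) →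
      dist (β p.2.2.1) (f x) < (r p.2.2.2 : ℝ)}, fun x hx l n => ?_⟩
    constructor
    · intro hlt
      set ε := (r n : ℝ) - dist (β l) (f x) with hεdef
      have hε : 0 < ε := by linarith
      rw [Metric.continuousOn_iff] at hf
      obtain ⟨δ, hδ, hδf⟩ := hf x hx ε hε
      obtain ⟨m, hm⟩ := hracc (δ / 2) (by linarith)
      have hrm : (0 : ℝ) < r m := by exact_mod_cast hrpos m
      obtain ⟨k, hk⟩ := hα.exists_dist_lt x hrm
      rw [dist_comm] at hk
      refine ⟨k, m, fun y hy hky => ?_, hk⟩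
      have hdy : dist y x < δ := by
        have := dist_triangle y (α k) x
        rw [dist_comm y (α k)] at this
        linarith
      have := hδf y hy hdy
      have h2 := dist_triangle (β l) (f x) (f y)
      rw [dist_comm (f x) (f y)] at h2
      linarith
    · rintro ⟨k, m, hkm, hk⟩
      exact hkm x hx hk
end

section
/- A metric (α,β)-approximation system for f exists if and only if f is continuous. Moreover, if f is continuous, then the set of all (k,m,l,n) ∈ K × ℕ × L × ℕ such that for all x ∈ E, d(α(k),x) < r_m implies e(β(l),f(x)) < r_n, is a metric (α,β)-approximation system for f. -/
/-- `S` is a metric (α,β)-approximation system for `f` on `E`. -/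
def MetricApprox {X Y K L : Type*} [MetricSpace X] [MetricSpace Y]
    (α : K → X) (β : L → Y) (r : ℕ → ℚ) (E : Set X) (f : X → Y)
    (S : Set (K × ℕ × L × ℕ)) : Prop :=
  ∀ x ∈ E,
    (∀ k m l n, (k, m, l, n) ∈ S → dist (α k) x < (r m : ℝ) →
        dist (β l) (f x) < (r n : ℝ)) ∧
    ∀ n : ℕ, ∃ m : ℕ, ∀ k : K, dist (α k) x < (r m : ℝ) →
        ∃ l : L, (k, m, l, n) ∈ S

/-- a metric (α,β)-approximation system for f exists iff f is
continuous; moreover, if f is continuous then the set of all (k,m,l,n) with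
∀ x ∈ E (d(α k,x) < r m → e(β l, f x) < r n) is such a system. -/
theorem stmt10 {X Y : Type*} [MetricSpace X] [MetricSpace Y] {K L : Type*}
    (α : K → X) (β : L → Y) (hα : DenseRange α) (hβ : DenseRange β)
    (r : ℕ → ℚ) (hrpos : ∀ n, 0 < r n)
    (hracc : ∀ ε : ℝ, 0 < ε → ∃ n, (r n : ℝ) < ε)
    (E : Set X) (f : X → Y) :
    ((∃ S : Set (K × ℕ × L × ℕ), MetricApprox α β r E f S) ↔ ContinuousOn f E) ∧
    (ContinuousOn f E → MetricApprox α β r E f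
      {q : K × ℕ × L × ℕ | ∀ x ∈ E, dist (α q.1) x < (r q.2.1 : ℝ) →
          dist (β q.2.2.1) (f x) < (r q.2.2.2 : ℝ)}) := by
  have hrpos' : ∀ n, (0:ℝ) < (r n : ℝ) := fun n => by exact_mod_cast hrpos n
  have key : ContinuousOn f E → MetricApprox α β r E f
      {q : K × ℕ × L × ℕ | ∀ x ∈ E, dist (α q.1) x < (r q.2.1 : ℝ) →
          dist (β q.2.2.1) (f x) < (r q.2.2.2 : ℝ)} := by
    intro hf x hx
    constructor
    · intro k m l n hq hd
      exact hq x hx hd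
    · intro n
      have hcx := hf x hx
      rw [Metric.continuousWithinAt_iff] at hcx
      obtain ⟨δ, hδ, hδ'⟩ := hcx ((r n : ℝ) / 2) (by linarith [hrpos' n])
      obtain ⟨m, hm⟩ := hracc (δ / 2) (by linarith)
      refine ⟨m, fun k hk => ?_⟩
      obtain ⟨l, hl⟩ := Metric.denseRange_iff.mp hβ (f x) ((r n : ℝ) / 2)
        (by linarith [hrpos' n])
      refine ⟨l, fun y hy hky => ?_⟩
      have hyx : dist y x < δ := by
        have h1 := dist_triangle y (α k) x
        rw [dist_comm y (α k)] at h1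
        linarith
      have h2 := hδ' hy hyx
      calc dist (β l) (f y) ≤ dist (β l) (f x) + dist (f x) (f y) :=
            dist_triangle _ _ _
        _ < (r n : ℝ) := by
            rw [dist_comm (β l) (f x), dist_comm (f x) (f y)]; linarith
  refine ⟨⟨?_, fun hf => ⟨_, key hf⟩⟩, key⟩
  rintro ⟨S, hS⟩
  rw [Metric.continuousOn_iff]
  intro x hx ε hε
  obtain ⟨n, hn⟩ := hracc (ε / 2) (by linarith)
  obtain ⟨m, hm⟩ := (hS x hx).2 n
  refine ⟨(r m : ℝ), hrpos' m, fun y hy hxy => ?_⟩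
  obtain ⟨k, hk⟩ := Metric.denseRange_iff.mp hα x ((r m : ℝ) - dist y x)
    (by linarith)
  have hkx : dist (α k) x < (r m : ℝ) := by
    rw [dist_comm]; have := dist_nonneg (x := y) (y := x); linarith
  have hky : dist (α k) y < (r m : ℝ) := by
    have h1 := dist_triangle (α k) x y
    rw [dist_comm (α k) x, dist_comm x y] at h1
    linarith
  obtain ⟨l, hl⟩ := hm k hkx
  have h1 := (hS x hx).1 k m l n hl hkx
  have h2 := (hS y hy).1 k m l n hl hky
  calc dist (f y) (f x) ≤ dist (f y) (β l) + dist (β l) (f x) := dist_triangle _ _ _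
    _ < ε := by rw [dist_comm (f y) (β l)]; linarith
end

section
/- If f is continuous, then the set of all (k,m,l,n) ∈ K × ℕ × L × ℕ such that ∀x ∈ E (d(α(k),x) < r_m ⇒ e(β(l),f(x)) < r_n) is simultaneously the maximal metric (α,β)-approximation system for f and the maximal topological (α,β)-approximation system for f (each with respect to set inclusion). -/
/-- `S` is a topological (α,β)-approximation system for `f` on `E`. -/
def TopApprox {X Y K L : Type*} [MetricSpace X] [MetricSpace Y]
    (α : K → X) (β : L → Y) (r : ℕ → ℚ) (E : Set X) (f : X → Y)
    (S : Set (K × ℕ × L × ℕ)) : Prop :=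
  ∀ x ∈ E, ∀ l : L, ∀ n : ℕ,
    dist (β l) (f x) < (r n : ℝ) ↔
      ∃ k m, (k, m, l, n) ∈ S ∧ dist (α k) x < (r m : ℝ)

/-- if f is continuous, the set of all (k,m,l,n) with
∀ x ∈ E (d(α k,x) < r m → e(β l,f x) < r n) is simultaneously the maximal metric
and the maximal topological (α,β)-approximation system for f. -/
theorem stmt11 {X Y : Type*} [MetricSpace X] [MetricSpace Y] {K L : Type*}
    (α : K → X) (β : L → Y) (hα : DenseRange α) (hβ : DenseRange β)
    (r : ℕ → ℚ) (hrpos : ∀ n, 0 < r n)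
    (hracc : ∀ ε : ℝ, 0 < ε → ∃ n, (r n : ℝ) < ε)
    (E : Set X) (f : X → Y) (hf : ContinuousOn f E) :
    MetricApprox α β r E f
      {q : K × ℕ × L × ℕ | ∀ x ∈ E, dist (α q.1) x < (r q.2.1 : ℝ) →
          dist (β q.2.2.1) (f x) < (r q.2.2.2 : ℝ)} ∧
    TopApprox α β r E f
      {q : K × ℕ × L × ℕ | ∀ x ∈ E, dist (α q.1) x < (r q.2.1 : ℝ) →
          dist (β q.2.2.1) (f x) < (r q.2.2.2 : ℝ)} ∧
    (∀ S : Set (K × ℕ × L × ℕ), MetricApprox α β r E f S →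
        S ⊆ {q : K × ℕ × L × ℕ | ∀ x ∈ E, dist (α q.1) x < (r q.2.1 : ℝ) →
            dist (β q.2.2.1) (f x) < (r q.2.2.2 : ℝ)}) ∧
    (∀ S : Set (K × ℕ × L × ℕ), TopApprox α β r E f S →
        S ⊆ {q : K × ℕ × L × ℕ | ∀ x ∈ E, dist (α q.1) x < (r q.2.1 : ℝ) →
            dist (β q.2.2.1) (f x) < (r q.2.2.2 : ℝ)}) := by
  have hcont := Metric.continuousOn_iff.mp hf
  refine ⟨?_, ?_, ?_, ?_⟩
  · intro x hx
    constructor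
    · intro k m l n hS hd
      exact hS x hx hd
    · intro n
      have hnR : (0:ℝ) < (r n : ℝ) := by exact_mod_cast hrpos n
      have hn4 : (0:ℝ) < (r n : ℝ) / 4 := by linarith
      obtain ⟨δ, hδ, hδx⟩ := hcont x hx ((r n : ℝ) / 2) (by linarith)
      obtain ⟨m, hm⟩ := hracc (δ / 2) (by positivity)
      obtain ⟨l, hl⟩ := hβ.exists_dist_lt (f x) hn4
      refine ⟨m, fun k hk => ⟨l, fun x' hx' hd' => ?_⟩⟩
      have hxx : dist x' x < δ := by
        calc dist x' x ≤ dist x' (α k) + dist (α k) x := dist_triangle _ _ _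
          _ < δ / 2 + δ / 2 := by
              rw [dist_comm x' (α k)]
              exact add_lt_add (lt_trans hd' hm) (lt_trans hk hm)
          _ = δ := by ring
      have := hδx x' hx' hxx
      calc dist (β l) (f x') ≤ dist (β l) (f x) + dist (f x) (f x') := dist_triangle _ _ _
        _ < (r n : ℝ) / 4 + (r n : ℝ) / 2 := by
            rw [dist_comm (β l) (f x), dist_comm (f x) (f x')]
            exact add_lt_add hl this
        _ < r n := by linarith [hn4]
  · intro x hx l n
    constructor
    · intro h
      set ε := (r n : ℝ) - dist (β l) (f x) with hε
      have hεpos : 0 < ε := by simp [hε]; linarith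
      obtain ⟨δ, hδ, hδx⟩ := hcont x hx ε hεpos
      obtain ⟨m, hm⟩ := hracc (δ / 2) (by positivity)
      obtain ⟨k, hk⟩ := hα.exists_dist_lt x (lt_of_lt_of_le (by exact_mod_cast hrpos m) le_rfl : (0:ℝ) < (r m : ℝ))
      rw [dist_comm] at hk
      refine ⟨k, m, fun x' hx' hd' => ?_, hk⟩
      have hxx : dist x' x < δ := by
        calc dist x' x ≤ dist x' (α k) + dist (α k) x := dist_triangle _ _ _
          _ < δ / 2 + δ / 2 := by
              rw [dist_comm x' (α k)]
              exact add_lt_add (lt_trans hd' hm) (lt_trans hk hm)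
          _ = δ := by ring
      have h2 := hδx x' hx' hxx
      calc dist (β l) (f x') ≤ dist (β l) (f x) + dist (f x) (f x') := dist_triangle _ _ _
        _ < dist (β l) (f x) + ε := by
            rw [dist_comm (f x) (f x')]; linarith
        _ = r n := by rw [hε]; ring
    · rintro ⟨k, m, hS, hk⟩
      exact hS x hx hk
  · intro S hS q hq x hx hd
    obtain ⟨ha, _⟩ := hS x hx
    exact ha q.1 q.2.1 q.2.2.1 q.2.2.2 hq hd
  · intro S hS q hq x hx hd
    exact (hS x hx q.2.2.1 q.2.2.2).mpr ⟨q.1, q.2.1, hq, hd⟩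
end

section
/- If there exists a recursively enumerable metric (α,β)-approximation system for f, then f is (α,β)-computable: there is a recursive operator F such that whenever u : ℕ → K satisfies d(α(u(t)), x) < r_t for all t (u is an α-name of x ∈ E), the function F(u) : ℕ → L is total and satisfies e(β(F(u)(n)), f(x)) < r_n for all n (F(u) is a β-name of f(x)). -/
/-- `F` is a recursive operator on partial functions ℕ ⇀ ℕ: its behaviour is
determined, via an r.e. set `W`, by finite parts (lists of pairs) of the graph of the
input function. -/
def IsRecOp (F : (ℕ →. ℕ) → (ℕ →. ℕ)) : Prop :=
  ∃ W : Set (List (ℕ × ℕ) × ℕ × ℕ), IsRE W ∧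
    ∀ (u : ℕ →. ℕ) (n m : ℕ),
      m ∈ F u n ↔ ∃ l : List (ℕ × ℕ), (∀ p ∈ l, p.2 ∈ u p.1) ∧ (l, n, m) ∈ W

/-- `S ⊆ K×ℕ×L×ℕ` is a metric (α,β)-approximation system for `f` on `E`, where
`K = dom α` and `L = dom β` are subsets of ℕ. -/
def MetricApproxOn {X Y : Type*} [MetricSpace X] [MetricSpace Y]
    (K L : Set ℕ) (α : ℕ → X) (β : ℕ → Y) (r : ℕ → ℚ) (E : Set X) (f : X → Y)
    (S : Set (ℕ × ℕ × ℕ × ℕ)) : Prop :=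
  (∀ s ∈ S, s.1 ∈ K ∧ s.2.2.1 ∈ L) ∧
  ∀ x ∈ E,
    (∀ k m l n, (k, m, l, n) ∈ S → dist (α k) x < (r m : ℝ) →
        dist (β l) (f x) < (r n : ℝ)) ∧
    ∀ n : ℕ, ∃ m : ℕ, ∀ k ∈ K, dist (α k) x < (r m : ℝ) →
        ∃ l, (k, m, l, n) ∈ S

open Nat.Partrec.Code in
theorem Partrec.exists_primrec_dom_iff {α σ : Type*} [Primcodable α] [Primcodable σ]
    {f : α →. σ} (hf : Partrec f) :
    ∃ D : α → ℕ → Bool, Primrec₂ D ∧ ∀ a, (f a).Dom ↔ ∃ k, D a k = true := by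
  obtain ⟨c, hc⟩ := exists_code.1 hf
  refine ⟨fun a k => (evaln k c (Encodable.encode a)).isSome,
    Primrec.option_isSome.comp <| primrec_evaln.comp <|
      (Primrec.snd.pair (Primrec.const c)).pair (Primrec.encode.comp Primrec.fst), fun a => ?_⟩
  have heval : eval c (Encodable.encode a) = (f a).map Encodable.encode := by
    simp [hc, Encodable.encodek]
  have hdom : (f a).Dom ↔ (eval c (Encodable.encode a)).Dom := by rw [heval]; rfl
  rw [hdom, Part.dom_iff_mem]
  simp only [evaln_complete, Option.isSome_iff_exists, Option.mem_def]
  exact ⟨fun ⟨x, k, h⟩ => ⟨k, x, h⟩, fun ⟨k, x, h⟩ => ⟨x, k, h⟩⟩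

theorem REPred.exists_primrec_iff {α : Type*} [Primcodable α] {p : α → Prop} (hp : REPred p) :
    ∃ D : α → ℕ → Bool, Primrec₂ D ∧ ∀ a, p a ↔ ∃ k, D a k = true := by
  obtain ⟨D, hD, hdom⟩ := Partrec.exists_primrec_dom_iff hp
  exact ⟨D, hD, fun a => Iff.trans ⟨fun h => ⟨h, trivial⟩, fun ⟨h, _⟩ => h⟩ (hdom a)⟩

def List.toPFun {α β : Type*} [BEq α] (l : List (α × β)) : α →. β := fun a => l.lookup a

section toPFun

variable {α β : Type*} [BEq α] [LawfulBEq α] {l : List (α × β)} {a : α} {b : β}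

theorem List.mem_of_mem_toPFun (h : b ∈ l.toPFun a) : (a, b) ∈ l := by
  obtain ⟨l₁, l₂, rfl, -⟩ := List.lookup_eq_some_iff.1 (Part.mem_ofOption.1 h)
  simp

theorem List.toPFun_dom_of_mem (h : (a, b) ∈ l) : (l.toPFun a).Dom :=
  (Part.ofOption_dom _).2 (List.lookup_isSome_iff.2 ⟨(a, b), h, beq_self_eq_true a⟩)

theorem List.toPFun_le {u : α →. β} (hl : ∀ p ∈ l, p.2 ∈ u p.1) (a : α) : l.toPFun a ≤ u a :=
  fun _ hb => hl _ (List.mem_of_mem_toPFun hb)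

end toPFun

theorem List.partrec₂_toPFun {α β : Type*} [Primcodable α] [Primcodable β] [DecidableEq α] :
    Partrec₂ fun (l : List (α × β)) a => l.toPFun a :=
  (Primrec.listLookup.comp Primrec.snd Primrec.fst).to_comp.ofOption

theorem Part.eq_of_le_of_dom {α : Type*} {x y : Part α} (hle : x ≤ y) (hx : x.Dom) : x = y :=
  (Part.eq_some_iff.2 (Part.get_mem hx)).trans (Part.eq_some_iff.2 (hle _ (Part.get_mem hx))).symm

theorem Nat.rfind_mono {p p' : ℕ →. Bool} (h : ∀ n, p n ≤ p' n) : Nat.rfind p ≤ Nat.rfind p' :=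
  fun _ hn => Nat.mem_rfind.2
    ⟨h _ _ (Nat.mem_rfind.1 hn).1, fun hm => h _ _ ((Nat.mem_rfind.1 hn).2 hm)⟩

theorem Nat.mem_rfind_congr {p p' : ℕ →. Bool} {n : ℕ} (h : ∀ m ≤ n, p m = p' m) :
    n ∈ Nat.rfind p ↔ n ∈ Nat.rfind p' := by
  simp only [Nat.mem_rfind, h n le_rfl]
  exact and_congr_right fun _ => forall₂_congr fun m hm => by rw [h m hm.le]

theorem isRecOp_of_finite_use {F : (ℕ →. ℕ) → (ℕ →. ℕ)}
    (hmono : ∀ u v : ℕ →. ℕ, (∀ i, v i ≤ u i) → ∀ n, F v n ≤ F u n)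
    (huse : ∀ u n m, m ∈ F u n →
      ∃ l : List (ℕ × ℕ), (∀ p ∈ l, p.2 ∈ u p.1) ∧ m ∈ F l.toPFun n)
    (hcomp : Partrec₂ fun (l : List (ℕ × ℕ)) n => F l.toPFun n) : IsRecOp F := by
  refine ⟨{t | t.2.2 ∈ F t.1.toPFun t.2.1}, ?_, fun u n m => ⟨huse u n m, ?_⟩⟩
  · have hEq : REPred fun q : (List (ℕ × ℕ) × ℕ × ℕ) × ℕ => q.2 = q.1.2.2 :=
      (Primrec.eq.comp Primrec.snd (Primrec.snd.comp (Primrec.snd.comp Primrec.fst))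
        ).computablePred.to_re
    refine ((hcomp.comp Computable.fst (Computable.fst.comp Computable.snd)).bind hEq.to₂).of_eq
      fun t => Part.ext fun _ => ?_
    simp
  · rintro ⟨l, hl, hm⟩
    exact hmono u _ (List.toPFun_le hl) n m hm

def searchOp (q o : ℕ → ℕ) (T : ℕ → ℕ → ℕ → Bool) (u : ℕ →. ℕ) (n : ℕ) : Part ℕ :=
  (Nat.rfind fun N => (u (q N)).map (T n N)).map o

section searchOp

variable {q o : ℕ → ℕ} {T : ℕ → ℕ → ℕ → Bool}

theorem searchOp_mono {u v : ℕ →. ℕ} (h : ∀ i, v i ≤ u i) (n : ℕ) :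
    searchOp q o T v n ≤ searchOp q o T u n := by
  rintro _ hm
  obtain ⟨N, hN, rfl⟩ := (Part.mem_map_iff _).1 hm
  refine Part.mem_map _ (Nat.rfind_mono (fun N' b hb => ?_) N hN)
  obtain ⟨a, ha, rfl⟩ := (Part.mem_map_iff _).1 hb
  exact Part.mem_map _ (h _ _ ha)

theorem exists_list_of_mem_searchOp {u : ℕ →. ℕ} {n m : ℕ} (hm : m ∈ searchOp q o T u n) :
    ∃ l : List (ℕ × ℕ), (∀ p ∈ l, p.2 ∈ u p.1) ∧ m ∈ searchOp q o T l.toPFun n := by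
  obtain ⟨N, hN, rfl⟩ := (Part.mem_map_iff _).1 hm
  have hdom : ∀ N' ≤ N, (u (q N')).Dom := by
    intro N' hN'
    rcases hN'.lt_or_eq with hlt | rfl
    · exact ((Nat.mem_rfind.1 hN).2 hlt).1
    · exact (Nat.mem_rfind.1 hN).1.1
  -- A search that stops at `N` has queried `u` only at `q 0, …, q N`.
  choose! g hg using fun N' hN' => Part.dom_iff_mem.1 (hdom N' hN')
  set l := (List.range (N + 1)).map fun N' => (q N', g N')
  have hl : ∀ p ∈ l, p.2 ∈ u p.1 := by
    simp only [l, List.mem_map, List.mem_range, Nat.lt_succ_iff]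
    rintro _ ⟨N', hN', rfl⟩
    exact hg N' hN'
  refine ⟨l, hl, Part.mem_map _ ((Nat.mem_rfind_congr fun N' hN' => ?_).1 hN)⟩
  have hmem : (q N', g N') ∈ l :=
    List.mem_map.2 ⟨N', List.mem_range.2 (Nat.lt_succ_of_le hN'), rfl⟩
  rw [Part.eq_of_le_of_dom (List.toPFun_le hl (q N')) (List.toPFun_dom_of_mem hmem)]

theorem partrec₂_searchOp (hq : Computable q) (ho : Computable o)
    (hT : Computable fun p : ℕ × ℕ × ℕ => T p.1 p.2.1 p.2.2) :
    Partrec₂ fun (l : List (ℕ × ℕ)) n => searchOp q o T l.toPFun n := by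
  refine Partrec.map (Partrec.rfind ?_) (ho.comp Computable.snd).to₂
  exact Partrec.map
    (List.partrec₂_toPFun.comp (Computable.fst.comp Computable.fst) (hq.comp Computable.snd))
    (hT.comp ((Computable.snd.comp (Computable.fst.comp Computable.fst)).pair
      ((Computable.snd.comp Computable.fst).pair Computable.snd))).to₂

theorem isRecOp_searchOp (hq : Computable q) (ho : Computable o)
    (hT : Computable fun p : ℕ × ℕ × ℕ => T p.1 p.2.1 p.2.2) : IsRecOp (searchOp q o T) :=
  isRecOp_of_finite_use (fun _ _ h => searchOp_mono h) (fun _ _ _ => exists_list_of_mem_searchOp)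
    (partrec₂_searchOp hq ho hT)

theorem exists_searchOp_eq_some {u : ℕ → ℕ} {n : ℕ} (h : ∃ N, T n N (u (q N)) = true) :
    ∃ N, T n N (u (q N)) = true ∧
      searchOp q o T (fun t => Part.some (u t)) n = Part.some (o N) := by
  obtain ⟨M, hM⟩ := h
  obtain ⟨N, hN, -⟩ := Nat.rfind_min' (p := fun N => T n N (u (q N))) hM
  refine ⟨N, (Part.mem_some_iff.1 (Nat.rfind_spec hN)).symm, Part.eq_some_iff.2 ?_⟩
  simp only [searchOp, Part.map_some]
  exact Part.mem_map _ hN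

end searchOp

def approxSystemOp (D : ℕ × ℕ × ℕ × ℕ → ℕ → Bool) : (ℕ →. ℕ) → (ℕ →. ℕ) :=
  searchOp (fun N => N.unpair.1) (fun N => N.unpair.2.unpair.1)
    fun n N a => D (a, N.unpair.1, N.unpair.2.unpair.1, n) N.unpair.2.unpair.2

theorem isRecOp_approxSystemOp {D : ℕ × ℕ × ℕ × ℕ → ℕ → Bool} (hD : Primrec₂ D) :
    IsRecOp (approxSystemOp D) := by
  have hm : Primrec fun N : ℕ => N.unpair.1 := Primrec.fst.comp Primrec.unpair
  have hl : Primrec fun N : ℕ => N.unpair.2.unpair.1 :=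
    hm.comp (Primrec.snd.comp Primrec.unpair)
  have hk : Primrec fun N : ℕ => N.unpair.2.unpair.2 :=
    Primrec.snd.comp (Primrec.unpair.comp (Primrec.snd.comp Primrec.unpair))
  have hN : Primrec fun p : ℕ × ℕ × ℕ => p.2.1 := Primrec.fst.comp Primrec.snd
  refine isRecOp_searchOp hm.to_comp hl.to_comp (hD.comp ?_ (hk.comp hN)).to_comp
  exact (Primrec.snd.comp Primrec.snd).pair
    ((hm.comp hN).pair ((hl.comp hN).pair Primrec.fst))

theorem exists_approxSystemOp_eq_some {D : ℕ × ℕ × ℕ × ℕ → ℕ → Bool} {u : ℕ → ℕ} {n m l k : ℕ}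
    (h : D (u m, m, l, n) k = true) :
    ∃ m l k, D (u m, m, l, n) k = true ∧
      approxSystemOp D (fun t => Part.some (u t)) n = Part.some l := by
  obtain ⟨N, hN, hF⟩ := exists_searchOp_eq_some (u := u) (q := fun N => N.unpair.1)
    (o := fun N => N.unpair.2.unpair.1)
    (T := fun n N a => D (a, N.unpair.1, N.unpair.2.unpair.1, n) N.unpair.2.unpair.2)
    ⟨Nat.pair m (Nat.pair l k), by simpa using h⟩
  exact ⟨_, _, _, hN, hF⟩

theorem stmt14_general {X Y : Type*} [MetricSpace X] [MetricSpace Y]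
    (K L : Set ℕ) (α : ℕ → X) (β : ℕ → Y)
    (r : ℕ → ℚ)
    (E : Set X) (f : X → Y) (S : Set (ℕ × ℕ × ℕ × ℕ))
    (hSre : IsRE S) (hS : MetricApproxOn K L α β r E f S) :
    ∃ F : (ℕ →. ℕ) → (ℕ →. ℕ), IsRecOp F ∧
      ∀ x ∈ E, ∀ u : ℕ → ℕ, (∀ t, u t ∈ K ∧ dist (α (u t)) x < (r t : ℝ)) →
        ∀ n : ℕ, ∃ l : ℕ, F (fun t => Part.some (u t)) n = Part.some l ∧
          l ∈ L ∧ dist (β l) (f x) < (r n : ℝ) := by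
  obtain ⟨D, hD, hSD⟩ := REPred.exists_primrec_iff hSre
  refine ⟨approxSystemOp D, isRecOp_approxSystemOp hD, fun x hx u hu n => ?_⟩
  obtain ⟨m, hm⟩ := (hS.2 x hx).2 n
  obtain ⟨l, hl⟩ := hm (u m) (hu m).1 (hu m).2
  obtain ⟨k, hk⟩ := (hSD _).1 hl
  obtain ⟨m', l', k', hk', hF⟩ := exists_approxSystemOp_eq_some hk
  have hs : (u m', m', l', n) ∈ S := (hSD _).2 ⟨k', hk'⟩
  exact ⟨l', hF, (hS.1 _ hs).2, (hS.2 x hx).1 _ _ _ _ hs (hu m').2⟩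

/-- an r.e. metric (α,β)-approximation system for f yields
(α,β)-computability of f: some recursive operator transforms every α-name of every
x ∈ E into a β-name of f(x). -/
theorem stmt14 {X Y : Type*} [MetricSpace X] [MetricSpace Y]
    (K L : Set ℕ) (α : ℕ → X) (β : ℕ → Y)
    (hα : Dense (α '' K)) (hβ : Dense (β '' L))
    (r : ℕ → ℚ) (hrpos : ∀ n, 0 < r n)
    (hracc : ∀ ε : ℝ, 0 < ε → ∃ n, (r n : ℝ) < ε) (hrcomp : Computable r)
    (E : Set X) (f : X → Y) (S : Set (ℕ × ℕ × ℕ × ℕ))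
    (hSre : IsRE S) (hS : MetricApproxOn K L α β r E f S) :
    ∃ F : (ℕ →. ℕ) → (ℕ →. ℕ), IsRecOp F ∧
      ∀ x ∈ E, ∀ u : ℕ → ℕ, (∀ t, u t ∈ K ∧ dist (α (u t)) x < (r t : ℝ)) →
        ∀ n : ℕ, ∃ l : ℕ, F (fun t => Part.some (u t)) n = Part.some l ∧
          l ∈ L ∧ dist (β l) (f x) < (r n : ℝ) :=
  stmt14_general K L α β r E f S hSre hS
end

section
/- Let S be a metric (α,β)-approximation system for f, and let S' = {(k,m,l',n') | l' ∈ L and there exist l, n with (k,m,l,n) ∈ S and e(β(l'), β(l)) < r_{n'} − r_n}. Then S' is a topological (α,β)-approximation system for f. -/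
/-- if S is a metric (α,β)-approximation system for f, then
S' = {(k,m,l',n') | ∃ l n, (k,m,l,n) ∈ S ∧ e(β l', β l) < r_{n'} − r_n} is a
topological (α,β)-approximation system for f. -/
theorem stmt18 {X Y : Type*} [MetricSpace X] [MetricSpace Y] {K L : Type*}
    (α : K → X) (β : L → Y) (hα : DenseRange α) (hβ : DenseRange β)
    (r : ℕ → ℚ) (hrpos : ∀ n, 0 < r n)
    (hracc : ∀ ε : ℝ, 0 < ε → ∃ n, (r n : ℝ) < ε)
    (E : Set X) (f : X → Y) (S : Set (K × ℕ × L × ℕ))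
    (hS : MetricApprox α β r E f S) :
    TopApprox α β r E f
      {s : K × ℕ × L × ℕ | ∃ l n, (s.1, s.2.1, l, n) ∈ S ∧
          dist (β s.2.2.1) (β l) < (r s.2.2.2 : ℝ) - (r n : ℝ)} := by
  intro x hx l n'
  obtain ⟨ha, hb⟩ := hS x hx
  constructor
  · intro hd
    -- choose n with 2 * r n < r n' - dist (β l) (f x)
    obtain ⟨n, hn⟩ := hracc (((r n' : ℝ) - dist (β l) (f x)) / 2) (by linarith)
    obtain ⟨m, hm⟩ := hb n
    obtain ⟨k, hk⟩ := Metric.denseRange_iff.mp hα x (r m : ℝ) (by exact_mod_cast hrpos m)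
    rw [dist_comm] at hk
    obtain ⟨l₀, hl₀⟩ := hm k hk
    have h0 := ha k m l₀ n hl₀ hk
    refine ⟨k, m, ⟨l₀, n, hl₀, ?_⟩, hk⟩
    have := dist_triangle (β l) (f x) (β l₀)
    rw [dist_comm (f x) (β l₀)] at this
    linarith
  · rintro ⟨k, m, ⟨l₀, n, hS0, hdl⟩, hk⟩
    have h0 := ha k m l₀ n hS0 hk
    have := dist_triangle (β l) (β l₀) (f x)
    linarith
end

section
/- Let S be a topological (α,β)-approximation system for f, and let S' = {(k',m',l,n) | k' ∈ K and there exist k, m with (k,m,l,n) ∈ S and d(α(k), α(k')) < r_m − r_{m'}}. Then S' is a metric (α,β)-approximation system for f. -/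
/-- if S is a topological (α,β)-approximation system for f, then
S' = {(k',m',l,n) | ∃ k m, (k,m,l,n) ∈ S ∧ d(α k, α k') < r_m − r_{m'}} is a metric
(α,β)-approximation system for f. -/
theorem stmt19 {X Y : Type*} [MetricSpace X] [MetricSpace Y] {K L : Type*}
    (α : K → X) (β : L → Y) (hα : DenseRange α) (hβ : DenseRange β)
    (r : ℕ → ℚ) (hrpos : ∀ n, 0 < r n)
    (hracc : ∀ ε : ℝ, 0 < ε → ∃ n, (r n : ℝ) < ε)
    (E : Set X) (f : X → Y) (S : Set (K × ℕ × L × ℕ))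
    (hS : TopApprox α β r E f S) :
    MetricApprox α β r E f
      {s : K × ℕ × L × ℕ | ∃ k m, (k, m, s.2.2.1, s.2.2.2) ∈ S ∧
          dist (α k) (α s.1) < (r m : ℝ) - (r s.2.1 : ℝ)} := by
  intro x hx
  constructor
  · rintro k' m' l n ⟨k, m, hkS, hd⟩ hk'x
    refine (hS x hx l n).2 ⟨k, m, hkS, ?_⟩
    calc dist (α k) x ≤ dist (α k) (α k') + dist (α k') x := dist_triangle _ _ _
      _ < ((r m : ℝ) - r m') + r m' := by linarith
      _ = r m := by ring
  · intro n
    obtain ⟨l, hl⟩ : ∃ l, dist (β l) (f x) < (r n : ℝ) := by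
      have := hβ.exists_dist_lt (f x) (show (0:ℝ) < (r n : ℝ) by exact_mod_cast hrpos n)
      obtain ⟨l, hl⟩ := this
      exact ⟨l, by rwa [dist_comm]⟩
    obtain ⟨k, m, hkS, hkx⟩ := (hS x hx l n).1 hl
    obtain ⟨m', hm'⟩ := hracc (((r m : ℝ) - dist (α k) x) / 2) (by linarith)
    refine ⟨m', fun k' hk'x => ⟨l, k, m, hkS, ?_⟩⟩
    calc dist (α k) (α k') ≤ dist (α k) x + dist x (α k') := dist_triangle _ _ _
      _ = dist (α k) x + dist (α k') x := by rw [dist_comm x (α k')]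
      _ < (r m : ℝ) - r m' := by linarith
end
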